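/- The skeleton singular functor Sing : UM → sFuz is fully faithful: for uber metric spaces (X,d) and (Y,e), every map of fuzzy simplicial sets Sing(X,d) → Sing(Y,e) is induced by a unique non-expansive map f : (X,d) → (Y,e). Concretely, any family of maps φ^n_a : [X,d]^n_a → [Y,e]^n_a natural in (n,a) is of the form (r_0,…,r_n) ↦ (f(r_0),…,f(r_n)) for a unique non-expansive f. -/
import Mathlib


open scoped ENNReal

/-- An uber metric: `d(x,x) = 0`, symmetry, and the triangle inequality. -/
def IsUberMetric {X : Type*} (d : X → X → ℝ≥0∞) : Prop :=
  (∀ x, d x x = 0) ∧ (∀ x y, d x y = d y x) ∧ (∀ x y z, d x z ≤ d x y + d y z)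

/-- `-log(a)` with `-log(0) = ∞`. -/
noncomputable def negLog (a : unitInterval) : ℝ≥0∞ :=
  if a.1 = 0 then ⊤ else ENNReal.ofReal (-Real.log a.1)

/-- The `(n,a)`-simplices of the fuzzy simplicial set `[X,d] ≅ Sing(X,d)`:
tuples `(r₀,…,rₙ)` with `d(rᵢ,rⱼ) ≤ -log a` for all `i ≠ j`. -/
def Br (X : Type*) (d : X → X → ℝ≥0∞) (n : ℕ) (a : unitInterval) :=
  {r : Fin (n + 1) → X // ∀ i j, i ≠ j → d (r i) (r j) ≤ negLog a}

/-- Constant 0-simplex. -/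
def cx {X : Type} (d : X → X → ℝ≥0∞) (a : unitInterval) (x : X) : Br X d 0 a :=
  ⟨fun _ => x, fun i j h => absurd (by omega : i = j) h⟩

/-- The skeleton singular functor `Sing : UM → sFuz` is fully faithful: every
family of maps `φⁿ_a : [X,d]ⁿ_a → [Y,e]ⁿ_a` natural in `(n,a)` (w.r.t. reindexing
along order-preserving maps and the inclusions as `a` decreases) is induced by a
unique non-expansive map `f : (X,d) → (Y,e)` via `(r₀,…,rₙ) ↦ (f r₀,…,f rₙ)`. -/
theorem sing_fully_faithful {X Y : Type} (d : X → X → ℝ≥0∞) (e : Y → Y → ℝ≥0∞)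
    (hd : IsUberMetric d) (he : IsUberMetric e)
    (φ : ∀ (n : ℕ) (a : unitInterval), Br X d n a → Br Y e n a)
    (hnat : ∀ (n m : ℕ) (a b : unitInterval), a ≤ b →
      ∀ (g : Fin (m + 1) →o Fin (n + 1)) (r : Br X d n b) (rr : Br X d m a),
        (rr.1 = fun i => r.1 (g i)) →
        (φ m a rr).1 = fun i => (φ n b r).1 (g i)) :
    ∃! f : X → Y,
      (∀ x y, e (f x) (f y) ≤ d x y) ∧
      ∀ (n : ℕ) (a : unitInterval) (r : Br X d n a),
        (φ n a r).1 = fun i => f (r.1 i) := by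
  set f : X → Y := fun x => (φ 0 0 (cx d 0 x)).1 0 with hf
  -- the value of φ on constant 0-simplices is independent of a
  have hconst : ∀ (a : unitInterval) (x : X), (φ 0 a (cx d a x)).1 = fun _ => f x := by
    intro a x
    have h := hnat 0 0 0 a (unitInterval.nonneg a) OrderHom.id (cx d a x) (cx d 0 x) rfl
    funext i
    have hi : i = 0 := by omega
    subst hi
    rw [hf]
    exact (congrFun h 0).symm
  -- every vertex of φ's value is f of the corresponding vertex
  have hvertex : ∀ (n : ℕ) (a : unitInterval) (r : Br X d n a) (i : Fin (n + 1)),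
      (φ n a r).1 i = f (r.1 i) := by
    intro n a r i
    have h := hnat n 0 a a le_rfl ⟨fun _ => i, fun _ _ _ => le_rfl⟩ r (cx d a (r.1 i)) rfl
    have h2 := congrFun h 0
    rw [hconst a (r.1 i)] at h2
    exact h2.symm
  refine ⟨f, ⟨?_, ?_⟩, ?_⟩
  · intro x y
    by_cases hxy : d x y = ⊤
    · rw [hxy]; exact le_top
    · -- pick a with negLog a = d x y
      set t : ℝ := (d x y).toReal with ht
      have ht0 : 0 ≤ t := ENNReal.toReal_nonneg
      set a : unitInterval := ⟨Real.exp (-t), (Real.exp_pos _).le,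
        Real.exp_le_one_iff.mpr (by linarith)⟩ with ha
      have hne : (Real.exp (-t)) ≠ 0 := (Real.exp_pos _).ne'
      have hna : negLog a = d x y := by
        show (if Real.exp (-t) = 0 then ⊤ else
          ENNReal.ofReal (-Real.log (Real.exp (-t)))) = d x y
        rw [if_neg hne, Real.log_exp, neg_neg, ht, ENNReal.ofReal_toReal hxy]
      have hmem : ∀ i j : Fin 2, i ≠ j → d (![x, y] i) (![x, y] j) ≤ negLog a := by
        intro i j hij
        rw [hna]
        fin_cases i <;> fin_cases j <;>
          first
            | exact absurd rfl hij
            | exact le_of_eq rfl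
            | exact le_of_eq (hd.2.1 y x)
      set r : Br X d 1 a := ⟨![x, y], hmem⟩ with hr
      have h0 : (φ 1 a r).1 0 = f x := hvertex 1 a r 0
      have h1 : (φ 1 a r).1 1 = f y := hvertex 1 a r 1
      have h := (φ 1 a r).2 0 1 (by decide)
      rw [h0, h1, hna] at h
      exact h
  · intro n a r
    funext i
    exact hvertex n a r i
  · intro f' ⟨_, hf'⟩
    funext x
    have h := congrFun (hf' 0 0 (cx d 0 x)) 0
    exact h.symm
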